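/- Let n ≥ 1 and let Ω ⊆ 𝕆_sⁿ be a nonempty axially symmetric slice-domain. Then Ω ∩ ℝⁿ ≠ ∅. -/

import Mathlib

/-! Octonions via the Cayley–Dickson construction on the quaternions,
the n-dimensional quadratic cone, the slice topology, and slice regularity. -/

noncomputable section
open Quaternion Topology

/-- The octonions, as `ℍ × ℍ` with the (L²) Euclidean norm and
Cayley–Dickson multiplication. -/
abbrev Oct : Type := WithLp 2 (ℍ × ℍ)

namespace Oct

def c1 (p : Oct) : ℍ := (WithLp.equiv 2 (ℍ × ℍ) p).1
def c2 (p : Oct) : ℍ := (WithLp.equiv 2 (ℍ × ℍ) p).2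
def mk (a b : ℍ) : Oct := (WithLp.equiv 2 (ℍ × ℍ)).symm (a, b)

instance : One Oct := ⟨mk 1 0⟩

/-- Cayley–Dickson multiplication. -/
instance : Mul Oct :=
  ⟨fun p q => mk (c1 p * c1 q - star (c2 q) * c2 p) (c2 q * c1 p + c2 p * star (c1 q))⟩

/-- Octonionic conjugation. -/
instance : Star Oct := ⟨fun p => mk (star (c1 p)) (-(c2 p))⟩

/-- Inverse: `p⁻¹ = ‖p‖⁻² • (star p)` (so `0⁻¹ = 0`). -/
instance : Inv Oct := ⟨fun p => (‖p‖ ^ 2)⁻¹ • star p⟩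

/-- The real inner product on `𝕆 ≅ ℝ⁸`, via polarization. -/
def oinner (p q : Oct) : ℝ := (1 / 4) * (‖p + q‖ ^ 2 - ‖p - q‖ ^ 2)

/-- The sphere `𝕊` of imaginary units of the octonions. -/
def Sph : Set Oct := {I | I * I = -1}

/-- The slice complex plane `ℂ_I = ℝ + ℝ I ⊆ 𝕆`. -/
def CI (I : Oct) : Set Oct := {z | ∃ s t : ℝ, z = s • (1 : Oct) + t • I}

end Oct

open Oct

/-- The point `x + y I ∈ ℂ_Iⁿ ⊆ 𝕆ⁿ`. -/
def aff {n : ℕ} (x y : Fin n → ℝ) (I : Oct) : Fin n → Oct :=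
  fun m => x m • (1 : Oct) + y m • I

/-- The embedding `ℝⁿ ⊆ 𝕆ⁿ`. -/
def ofRealn {n : ℕ} (x : Fin n → ℝ) : Fin n → Oct := fun m => x m • (1 : Oct)

/-- The slice `ℂ_Iⁿ ⊆ 𝕆ⁿ`. -/
def slicen (n : ℕ) (I : Oct) : Set (Fin n → Oct) := {q | ∃ x y : Fin n → ℝ, q = aff x y I}

/-- The `n`-dimensional quadratic cone `𝕆ₛⁿ = ⋃_{I ∈ 𝕊} ℂ_Iⁿ`. -/
def cone (n : ℕ) : Set (Fin n → Oct) := ⋃ I ∈ Sph, slicen n I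

/-- The slice topology `τ_s`: a set is open iff its trace on every slice `ℂ_Iⁿ`
is open (expressed via the canonical parametrizations `(x,y) ↦ x + yI`). -/
def τs (n : ℕ) : TopologicalSpace (Fin n → Oct) :=
  ⨆ I : Sph, TopologicalSpace.coinduced
    (fun p : (Fin n → ℝ) × (Fin n → ℝ) => aff p.1 p.2 I.1) inferInstance

/-- A slice-open subset of the quadratic cone. -/
def SliceOpen (n : ℕ) (Ω : Set (Fin n → Oct)) : Prop :=
  Ω ⊆ cone n ∧ IsOpen[τs n] Ω

/-- A slice-domain: a nonempty slice-connected slice-open subset of the cone. -/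
def SliceDomain (n : ℕ) (Ω : Set (Fin n → Oct)) : Prop :=
  SliceOpen n Ω ∧ @IsConnected _ (τs n) Ω

/-- Real-connectedness: `Ω ∩ ℝⁿ` is a (pre)connected subset of `ℝⁿ`. -/
def RealConnected (n : ℕ) (Ω : Set (Fin n → Oct)) : Prop :=
  IsPreconnected {x : Fin n → ℝ | ofRealn x ∈ Ω}

/-- Axially symmetric subsets of the cone. -/
def AxSymm (n : ℕ) (Ω : Set (Fin n → Oct)) : Prop :=
  ∀ (x y : Fin n → ℝ), ∀ I ∈ Sph, ∀ J ∈ Sph, aff x y I ∈ Ω → aff x y J ∈ Ω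

/-- The upper half-space `ℝ²ⁿ₊`: pairs `(x,y)` with `y = 0` or the first
nonzero coordinate of `y` positive. -/
def pos2n (n : ℕ) : Set ((Fin n → ℝ) × (Fin n → ℝ)) :=
  {p | p.2 = 0 ∨ ∃ m : Fin n, 0 < p.2 m ∧ ∀ k : Fin n, k < m → p.2 k = 0}

/-- `Ω_{s₁}`. -/
def s1 {n : ℕ} (Ω : Set (Fin n → Oct)) : Set ((Fin n → ℝ) × (Fin n → ℝ)) :=
  {p | ∃ I ∈ Sph, aff p.1 p.2 I ∈ Ω}

/-- `Ω_{s₂}`. -/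
def s2 {n : ℕ} (Ω : Set (Fin n → Oct)) : Set ((Fin n → ℝ) × (Fin n → ℝ)) :=
  {p | ∃ J ∈ Sph, ∃ K ∈ Sph, J ≠ K ∧ aff p.1 p.2 J ∈ Ω ∧ aff p.1 p.2 K ∈ Ω}

/-- Slice functions: induced on `Ω_{s₂}⁺` by a pair `(F₁, F₂)` via
`f(x + yI) = F₁(x,y) + I·F₂(x,y)`. -/
def IsSliceFun (n : ℕ) (Ω : Set (Fin n → Oct)) (f : (Fin n → Oct) → Oct) : Prop :=
  ∃ F₁ F₂ : (Fin n → ℝ) × (Fin n → ℝ) → Oct,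
    ∀ x y : Fin n → ℝ, (x, y) ∈ s2 Ω ∩ pos2n n → ∀ I ∈ Sph, aff x y I ∈ Ω →
      f (aff x y I) = F₁ (x, y) + I * F₂ (x, y)

/-- Holomorphy of a function of `n` slice variables, read through the
parametrization `(x,y) ↦ x + yI`: continuous partial derivatives (i.e. `C¹`)
and the Cauchy–Riemann equations `(∂/∂xₘ + I ∂/∂yₘ) g = 0` on `U`. -/
def Holo (n : ℕ) (I : Oct) (g : (Fin n → ℝ) × (Fin n → ℝ) → Oct)
    (U : Set ((Fin n → ℝ) × (Fin n → ℝ))) : Prop :=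
  ContDiffOn ℝ 1 g U ∧
  ∀ p ∈ U, ∀ m : Fin n,
    fderiv ℝ g p (Pi.single m 1, 0) + I * fderiv ℝ g p (0, Pi.single m 1) = 0

/-- Weak slice regularity: each restriction `f|_{Ω ∩ ℂ_Iⁿ}` is holomorphic. -/
def WSliceReg (n : ℕ) (Ω : Set (Fin n → Oct)) (f : (Fin n → Oct) → Oct) : Prop :=
  ∀ I ∈ Sph, Holo n I (fun p => f (aff p.1 p.2 I)) {p | aff p.1 p.2 I ∈ Ω}

/-- The complex structure `σ(a,b) = (−b,a)` on `𝕆²`. -/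
def sigma2 : Oct × Oct → Oct × Oct := fun w => (-w.2, w.1)

/-- Holomorphic stem maps: `F : V → 𝕆²` extends to a `C¹` map `G` on an open
neighborhood `U ⊇ V` satisfying `(∂/∂xₘ + σ ∂/∂yₘ) G = 0` on `U`. -/
def StemHolo (n : ℕ) (V : Set ((Fin n → ℝ) × (Fin n → ℝ)))
    (F : (Fin n → ℝ) × (Fin n → ℝ) → Oct × Oct) : Prop :=
  ∃ (U : Set ((Fin n → ℝ) × (Fin n → ℝ))) (G : (Fin n → ℝ) × (Fin n → ℝ) → Oct × Oct),
    IsOpen U ∧ V ⊆ U ∧ Set.EqOn G F V ∧ ContDiffOn ℝ 1 G U ∧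
    ∀ p ∈ U, ∀ m : Fin n,
      fderiv ℝ G p (Pi.single m 1, 0) + sigma2 (fderiv ℝ G p (0, Pi.single m 1)) = 0

/-- Strong slice regularity: `f` is induced by a holomorphic stem map on `Ω_{s₁}`. -/
def SSliceReg (n : ℕ) (Ω : Set (Fin n → Oct)) (f : (Fin n → Oct) → Oct) : Prop :=
  ∃ F : (Fin n → ℝ) × (Fin n → ℝ) → Oct × Oct, StemHolo n (s1 Ω) F ∧
    ∀ x y : Fin n → ℝ, ∀ I ∈ Sph, aff x y I ∈ Ω →
      f (aff x y I) = (F (x, y)).1 + I * (F (x, y)).2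

/-- An s-basis `{I, J, K}` of the octonions. -/
def IsSBasis (I J K : Oct) : Prop :=
  I ∈ Sph ∧ J ∈ Sph ∧ K ∈ Sph ∧
  LinearIndependent ℝ ![(1 : Oct), I, J, I * J, K, J * K, I * K, (I * J) * K] ∧
  Submodule.span ℝ (Set.range ![(1 : Oct), I, J, I * J, K, J * K, I * K, (I * J) * K]) = ⊤

/-- Iterated left multiplication `L_w^β = (L_{w₁})^{β₁} ∘ ⋯ ∘ (L_{wₙ})^{βₙ}`. -/
def Lpow {n : ℕ} (w : Fin n → Oct) (β : Fin n → ℕ) : Oct → Oct :=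
  fun a => (List.finRange n).foldr (fun ℓ c => (fun o => w ℓ * o)^[β ℓ] c) a

/-- The `*`-power `(q − p)^{*α} a = ∑_{β ≤ α} C(α,β) L_q^β (L_{−p}^{α−β} a)`. -/
def starPow {n : ℕ} (p : Fin n → Oct) (α : Fin n → ℕ) (a : Oct) (q : Fin n → Oct) : Oct :=
  ∑ β ∈ Finset.Iic α, (∏ ℓ, (α ℓ).choose (β ℓ)) • Lpow q β (Lpow (-p) (α - β) a)

/-- The `ℓ`-th slice derivative `∂_ℓ f (x + w) = (∂/∂x_ℓ) f (x + w)`. -/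
def sderiv {n : ℕ} (ℓ : Fin n) (f : (Fin n → Oct) → Oct) : (Fin n → Oct) → Oct :=
  fun q => deriv (fun t : ℝ => f (fun m => q m + (if m = ℓ then t else 0) • (1 : Oct))) 0

/-- The iterated slice derivative `f^{(α)} = (∂₁)^{α₁} ⋯ (∂ₙ)^{αₙ} f`. -/
def sderivMulti {n : ℕ} (α : Fin n → ℕ) (f : (Fin n → Oct) → Oct) : (Fin n → Oct) → Oct :=
  (List.finRange n).foldr (fun ℓ g => (sderiv ℓ)^[α ℓ] g) f

/-- The slice-polydisc `P̃(q₀, r)` (relative to `I ∈ 𝕊` with `q₀ ∈ ℂ_Iⁿ`):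
points `x + yJ` with `x ± yI` in the closed polydisc `P_I(q₀, r)`. -/
def polyDisc {n : ℕ} (q₀ : Fin n → Oct) (I : Oct) (r : Fin n → ℝ) : Set (Fin n → Oct) :=
  {q | ∃ x y : Fin n → ℝ, ∃ J ∈ Sph, q = aff x y J ∧
        (∀ ℓ, ‖aff x y I ℓ - q₀ ℓ‖ ≤ r ℓ) ∧ (∀ ℓ, ‖aff x (-y) I ℓ - q₀ ℓ‖ ≤ r ℓ)}

/-! If `Ω` missed `ℝⁿ`, the slice `ℂ_Iⁿ` through one of its points would split it: for `J ∉ ℂ_I`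
the slices `ℂ_Iⁿ` and `ℂ_Jⁿ` meet only in `ℝⁿ`, so `Ω ∩ ℂ_Iⁿ` and `Ω \ ℂ_Iⁿ` are both slice-open,
and axial symmetry moves the point of `Ω` to `ℂ_Jⁿ`, making `Ω \ ℂ_Iⁿ` nonempty. This contradicts
slice-connectedness. -/

namespace Oct

@[ext] lemma ext {p q : Oct} (h1 : c1 p = c1 q) (h2 : c2 p = c2 q) : p = q :=
  (WithLp.equiv 2 (ℍ × ℍ)).injective (Prod.ext h1 h2)

@[simp] lemma c1_mk (a b : ℍ) : c1 (mk a b) = a := rfl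
@[simp] lemma c2_mk (a b : ℍ) : c2 (mk a b) = b := rfl
@[simp] lemma c1_one : c1 (1 : Oct) = 1 := rfl
@[simp] lemma c2_one : c2 (1 : Oct) = 0 := rfl
@[simp] lemma c1_add (p q : Oct) : c1 (p + q) = c1 p + c1 q := rfl
@[simp] lemma c1_neg (p : Oct) : c1 (-p) = -c1 p := rfl
@[simp] lemma c2_neg (p : Oct) : c2 (-p) = -c2 p := rfl
@[simp] lemma c1_smul (r : ℝ) (p : Oct) : c1 (r • p) = r • c1 p := rfl
@[simp] lemma c1_mul (p q : Oct) : c1 (p * q) = c1 p * c1 q - star (c2 q) * c2 p := rfl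
@[simp] lemma c2_mul (p q : Oct) : c2 (p * q) = c2 q * c1 p + c2 p * star (c1 q) := rfl

lemma mk_mul_mk_zero (a b : ℍ) : mk a 0 * mk b 0 = mk (a * b) 0 := by
  ext <;> simp

lemma mk_mem_Sph {q : ℍ} (hq : q * q = -1) : mk q 0 ∈ Sph := by
  show mk q 0 * mk q 0 = -1
  ext <;> simp [mk_mul_mk_zero, hq]

lemma CI_subset_of_mem {I J : Oct} (h : J ∈ CI I) : CI J ⊆ CI I := by
  rintro z ⟨u, v, rfl⟩
  obtain ⟨s, t, rfl⟩ := h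
  exact ⟨u + v * s, v * t, by module⟩

lemma mem_CI_of_mem_CI {I J : Oct} (hJ : J ∈ CI I) (hJr : ∀ s : ℝ, J ≠ s • 1) :
    I ∈ CI J := by
  obtain ⟨s, t, rfl⟩ := hJ
  have ht : t ≠ 0 := by
    rintro rfl
    exact hJr s (by module)
  refine ⟨-(t⁻¹ * s), t⁻¹, ?_⟩
  rw [smul_add, smul_smul, smul_smul, inv_mul_cancel₀ ht, one_smul]
  module

private def unitI : Oct := mk (⟨0, 1, 0, 0⟩ : ℍ) 0
private def unitJ : Oct := mk (⟨0, 0, 1, 0⟩ : ℍ) 0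

lemma exists_mem_Sph_not_mem_CI (I : Oct) : ∃ J ∈ Sph, J ∉ CI I := by
  have hi : unitI ∈ Sph :=
    mk_mem_Sph (show (⟨0, 1, 0, 0⟩ : ℍ) * ⟨0, 1, 0, 0⟩ = -1 by ext <;> simp)
  have hj : unitJ ∈ Sph :=
    mk_mem_Sph (show (⟨0, 0, 1, 0⟩ : ℍ) * ⟨0, 0, 1, 0⟩ = -1 by ext <;> simp)
  have hi_real (s : ℝ) : unitI ≠ s • 1 := fun h => by
    have hi₁ : (c1 unitI).imI = 1 := rfl
    simp [h] at hi₁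
  have hj_CI : unitJ ∉ CI unitI := by
    rintro ⟨s, t, h⟩
    have hj₂ : (c1 unitJ).imJ = 1 := rfl
    have hi₂ : (c1 unitI).imJ = 0 := rfl
    simp [h, hi₂] at hj₂
  by_cases hiI : unitI ∈ CI I
  · exact ⟨unitJ, hj, fun hjI => hj_CI (CI_subset_of_mem (mem_CI_of_mem_CI hiI hi_real) hjI)⟩
  · exact ⟨unitI, hi, hiI⟩

end Oct

section Slices

variable {n : ℕ}

lemma aff_zero (x : Fin n → ℝ) (J : Oct) : aff x 0 J = ofRealn x :=
  funext fun m => by simp [aff, ofRealn]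

lemma aff_mem_slicen_of_mem_CI {I J : Oct} (h : J ∈ CI I) (x y : Fin n → ℝ) :
    aff x y J ∈ slicen n I := by
  obtain ⟨s, t, rfl⟩ := h
  exact ⟨fun m => x m + y m * s, fun m => y m * t, funext fun m => by simp only [aff]; module⟩

lemma eq_zero_of_aff_mem_slicen {I J : Oct} (hJ : J ∉ CI I) {x y : Fin n → ℝ}
    (h : aff x y J ∈ slicen n I) : y = 0 := by
  obtain ⟨x', y', he⟩ := h
  funext m
  by_contra hm
  have hcm : x m • (1 : Oct) + y m • J = x' m • 1 + y' m • I := congrFun he m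
  refine hJ ⟨(y m)⁻¹ * (x' m - x m), (y m)⁻¹ * y' m, ?_⟩
  calc J = (y m)⁻¹ • (y m • J) := (inv_smul_smul₀ hm J).symm
    _ = (y m)⁻¹ • ((x' m • 1 + y' m • I) - x m • 1) := by
      rw [← hcm, add_sub_cancel_left]
    _ = _ := by module

lemma isOpen_τs_iff (s : Set (Fin n → Oct)) :
    IsOpen[τs n] s ↔
      ∀ I : Sph, IsOpen {p : (Fin n → ℝ) × (Fin n → ℝ) | aff p.1 p.2 I.1 ∈ s} := by
  rw [τs, isOpen_iSup_iff]
  exact forall_congr' fun I => isOpen_coinduced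

end Slices

section RealFree

variable {n : ℕ} {Ω : Set (Fin n → Oct)}

lemma aff_not_mem_inter_slicen (hreal : ∀ x, ofRealn x ∉ Ω) {I J : Oct} (hJ : J ∉ CI I)
    (x y : Fin n → ℝ) :
    aff x y J ∉ Ω ∩ slicen n I := fun h => by
  rw [eq_zero_of_aff_mem_slicen hJ h.2, aff_zero] at h
  exact hreal x h.1

lemma isOpen_inter_slicen (hreal : ∀ x, ofRealn x ∉ Ω) (hΩ : IsOpen[τs n] Ω) (I : Oct) :
    IsOpen[τs n] (Ω ∩ slicen n I) := by
  rw [isOpen_τs_iff] at hΩ ⊢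
  intro J
  by_cases hJ : J.1 ∈ CI I
  · simpa only [Set.mem_inter_iff, aff_mem_slicen_of_mem_CI hJ, and_true] using hΩ J
  · simpa only [aff_not_mem_inter_slicen hreal hJ, Set.ofPred_false] using isOpen_empty

lemma isOpen_diff_slicen (hreal : ∀ x, ofRealn x ∉ Ω) (hΩ : IsOpen[τs n] Ω) (I : Oct) :
    IsOpen[τs n] (Ω \ slicen n I) := by
  rw [isOpen_τs_iff] at hΩ ⊢
  intro J
  by_cases hJ : J.1 ∈ CI I
  · simpa only [Set.mem_sdiff, aff_mem_slicen_of_mem_CI hJ, not_true_eq_false, and_false,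
      Set.ofPred_false] using isOpen_empty
  · convert hΩ J using 3 with p
    exact ⟨And.left, fun hp =>
      ⟨hp, fun hs => aff_not_mem_inter_slicen hreal hJ _ _ ⟨hp, hs⟩⟩⟩

end RealFree

theorem axially_symmetric_sliceDomain_meets_real_general (n : ℕ)
    (Ω : Set (Fin n → Oct)) (hax : AxSymm n Ω)
    (hΩ : SliceDomain n Ω) :
    ∃ x : Fin n → ℝ, ofRealn x ∈ Ω := by
  by_contra! hreal
  obtain ⟨⟨hcone, hopen⟩, ⟨q, hq⟩, hpre⟩ := hΩ
  obtain ⟨I, hI, x, y, rfl⟩ : ∃ I ∈ Sph, ∃ x y, q = aff x y I := by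
    simpa [cone, slicen] using hcone hq
  obtain ⟨J, hJ, hJI⟩ := exists_mem_Sph_not_mem_CI I
  have hqJ : aff x y J ∈ Ω := hax x y I hI J hJ hq
  obtain ⟨_, -, ⟨-, hin⟩, -, hout⟩ := hpre _ _
    (isOpen_inter_slicen hreal hopen I) (isOpen_diff_slicen hreal hopen I)
    (Set.inter_union_sdiff Ω _).superset ⟨_, hq, hq, x, y, rfl⟩
    ⟨_, hqJ, hqJ, fun hs => aff_not_mem_inter_slicen hreal hJI x y ⟨hqJ, hs⟩⟩
  exact hout hin

/-- A nonempty axially symmetric slice-domain meets `ℝⁿ`. -/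
theorem axially_symmetric_sliceDomain_meets_real (n : ℕ) (hn : 1 ≤ n)
    (Ω : Set (Fin n → Oct)) (hne : Ω.Nonempty) (hax : AxSymm n Ω)
    (hΩ : SliceDomain n Ω) :
    ∃ x : Fin n → ℝ, ofRealn x ∈ Ω :=
  axially_symmetric_sliceDomain_meets_real_general n Ω hax hΩ

end
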